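/- arXiv:2209.12658 — 2 statements merged into one kernel-verified Lean document; each statement's English description precedes it below -/
import Mathlib

section
/- For real w > 0 and y > 0 and complex z with Re(z) > 0, the generalized Raabe cosine transform ℜ_z(y,w) := (1/2)Γ(2z+1) ∫_0^∞ ((t-iw)^{-(2z+1)} + (t+iw)^{-(2z+1)}) cos(yt) dt satisfies the symmetry w^{2z} ℜ_z(y,w) = y^{2z} ℜ_z(w,y). -/
open Complex MeasureTheory

/-- The generalized Raabe cosine transform `ℜ_z(y,w)`. -/
noncomputable def raabe (z : ℂ) (y w : ℝ) : ℂ :=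
  (1/2) * Complex.Gamma (2*z + 1) *
    ∫ t in Set.Ioi (0:ℝ),
      (((t:ℂ) - Complex.I * w) ^ (-(2*z + 1)) + ((t:ℂ) + Complex.I * w) ^ (-(2*z + 1))) *
        Complex.cos (y * t)

/-!
Substituting `t = w τ` in the integral defining `ℜ_z(y, w)` pulls out `w^(-2z)` from the kernel
and leaves an integral depending on `w, y` only through the product `w y`:
`w^(2z) ℜ_z(y, w) = ℜ_z(w y, 1)`, which is symmetric in `w` and `y`.
-/

lemma Complex.ofReal_mul_cpow_of_pos {r : ℝ} (hr : 0 < r) (ζ c : ℂ) :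
    ((r : ℂ) * ζ) ^ c = (r : ℂ) ^ c * ζ ^ c := by
  rcases eq_or_ne ζ 0 with rfl | hζ
  · rcases eq_or_ne c 0 with rfl | hc
    · simp
    · simp [zero_cpow hc]
  have hr' : (r : ℂ) ≠ 0 := ofReal_ne_zero.mpr hr.ne'
  rw [cpow_def_of_ne_zero (mul_ne_zero hr' hζ), log_ofReal_mul hr hζ, ofReal_log hr.le,
    add_mul, exp_add, ← cpow_def_of_ne_zero hr', ← cpow_def_of_ne_zero hζ]

noncomputable def raabeIntegral (c : ℂ) (a b : ℝ) : ℂ :=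
  ∫ t in Set.Ioi (0:ℝ),
    (((t:ℂ) - I * a) ^ (-c) + ((t:ℂ) + I * a) ^ (-c)) * cos (b * t)

lemma raabeIntegral_eq_cpow_mul (c : ℂ) {a : ℝ} (ha : 0 < a) (b : ℝ) :
    raabeIntegral c a b = (a:ℂ) * ((a:ℂ) ^ (-c) * raabeIntegral c 1 (a * b)) := by
  have h_kernel : ∀ t : ℝ,
      (((a * t : ℝ) : ℂ) - I * a) ^ (-c) + (((a * t : ℝ) : ℂ) + I * a) ^ (-c) =
        (a:ℂ) ^ (-c) * (((t:ℂ) - I * (1:ℝ)) ^ (-c) + ((t:ℂ) + I * (1:ℝ)) ^ (-c)) := by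
    intro t
    rw [show ((a * t : ℝ) : ℂ) - I * a = (a:ℂ) * ((t:ℂ) - I * (1:ℝ)) by push_cast; ring,
      show ((a * t : ℝ) : ℂ) + I * a = (a:ℂ) * ((t:ℂ) + I * (1:ℝ)) by push_cast; ring,
      ofReal_mul_cpow_of_pos ha, ofReal_mul_cpow_of_pos ha, mul_add]
  have h_subst := integral_comp_mul_left_Ioi'
    (fun t : ℝ => (((t:ℂ) - I * a) ^ (-c) + ((t:ℂ) + I * a) ^ (-c)) * cos (b * t)) 0 ha
  simp only [mul_zero] at h_subst
  rw [raabeIntegral, ← h_subst, raabeIntegral, ← integral_const_mul, real_smul]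
  congr 2 with t
  rw [h_kernel, ofReal_mul, ofReal_mul]
  ring_nf

lemma cpow_mul_raabeIntegral (c : ℂ) {a : ℝ} (ha : 0 < a) (b : ℝ) :
    (a:ℂ) ^ (c - 1) * raabeIntegral c a b = raabeIntegral c 1 (a * b) := by
  have ha' : (a:ℂ) ≠ 0 := ofReal_ne_zero.mpr ha.ne'
  have h_pow : (a:ℂ) ^ (c - 1) * ((a:ℂ) * (a:ℂ) ^ (-c)) = 1 := by
    rw [mul_left_comm, ← cpow_add _ _ ha', show c - 1 + -c = (-1 : ℂ) by ring, cpow_neg_one,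
      mul_inv_cancel₀ ha']
  rw [raabeIntegral_eq_cpow_mul c ha, ← mul_assoc, ← mul_assoc, mul_assoc _ (a:ℂ), h_pow,
    one_mul]

lemma raabe_eq_raabeIntegral (z : ℂ) (y w : ℝ) :
    raabe z y w = (1/2) * Gamma (2*z + 1) * raabeIntegral (2*z + 1) w y := rfl

theorem stmt_0_general (z : ℂ) (y w : ℝ) (hy : 0 < y) (hw : 0 < w) :
    (w:ℂ) ^ (2*z) * raabe z y w = (y:ℂ) ^ (2*z) * raabe z w y := by
  have h_exp : 2 * z = (2 * z + 1) - 1 := by ring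
  have h_w := cpow_mul_raabeIntegral (2 * z + 1) hw y
  have h_y := cpow_mul_raabeIntegral (2 * z + 1) hy w
  rw [← h_exp] at h_w h_y
  rw [mul_comm y w] at h_y
  rw [raabe_eq_raabeIntegral, raabe_eq_raabeIntegral]
  linear_combination (1/2) * Gamma (2*z + 1) * (h_w - h_y)

theorem stmt_0 (z : ℂ) (hz : 0 < z.re) (y w : ℝ) (hy : 0 < y) (hw : 0 < w) :
    (w:ℂ) ^ (2*z) * raabe z y w = (y:ℂ) ^ (2*z) * raabe z w y :=
  stmt_0_general z y w hy hw
end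

section
/- For complex w with Re(w) > 0 and complex z with Re(z) > 0, ∫_0^∞ ((t-iw)^{-(2z+1)} + (t+iw)^{-(2z+1)}) dt = cos(πz)/(z w^{2z}), where complex powers use the principal branch. -/
/-!
For `a` off the closed negative real axis, `t ↦ (t + a) ^ s` is continuous on `[0, ∞)` and
`O(t ^ re s)` at infinity, so for `re s < -1` the fundamental theorem of calculus gives
`∫₀^∞ (t + a) ^ s dt = -a ^ (s + 1) / (s + 1)`. With `a = ∓ i w` and `s = -(2z + 1)` the two
terms are `(∓ i w) ^ (-2z) / (2z)`; since `re w > 0`, the principal logarithms satisfy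
`log (± i w) = ± iπ/2 + log w`, so their sum is `2 cos (π z) w ^ (-2z)`.
-/

open Complex MeasureTheory Real Filter Set Topology Asymptotics

namespace Complex

variable {a s w : ℂ}

theorem ofReal_add_mem_slitPlane (ha : a ∈ slitPlane) {t : ℝ} (ht : 0 ≤ t) :
    (t : ℂ) + a ∈ slitPlane := by
  rw [mem_slitPlane_iff] at ha ⊢
  simp only [add_re, ofReal_re, add_im, ofReal_im, zero_add]
  exact ha.imp_left fun h => by linarith

theorem isBigO_ofReal_add_cpow_atTop (a s : ℂ) :
    (fun t : ℝ => ((t : ℂ) + a) ^ s) =O[atTop] fun t => t ^ s.re := by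
  have hequiv : (fun t : ℝ => (t : ℂ) + a) ~[atTop] fun t => (t : ℂ) :=
    IsEquivalent.refl.add_isLittleO <| isLittleO_const_left.mpr <| .inr <| by
      simpa only [Function.comp_def, norm_real] using tendsto_norm_atTop_atTop
  have hnorm : (fun t : ℝ => ‖(t : ℂ) + a‖) =Θ[atTop] fun t => t :=
    isTheta_norm_left.mpr <| hequiv.isTheta.trans <| IsTheta.of_norm_eventuallyEq <| by
      filter_upwards [eventually_ge_atTop 0] with t ht
      simp [abs_of_nonneg ht]
  refine (isBigO_cpow_rpow isBoundedUnder_const).trans (hnorm.rpow ?_ ?_).isBigO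
  · exact Eventually.of_forall fun _ => norm_nonneg _
  · exact eventually_ge_atTop 0

theorem integrableOn_Ioi_ofReal_add_cpow (ha : a ∈ slitPlane) (hs : s.re < -1) :
    IntegrableOn (fun t : ℝ => ((t : ℂ) + a) ^ s) (Ioi 0) := by
  refine IntegrableOn.mono_set ?_ Ioi_subset_Ici_self
  have hcont : ContinuousOn (fun t : ℝ => ((t : ℂ) + a) ^ s) (Ici 0) :=
    (continuous_ofReal.add continuous_const).continuousOn.cpow_const
      fun t ht => ofReal_add_mem_slitPlane ha ht
  exact (hcont.locallyIntegrableOn measurableSet_Ici).integrableOn_of_isBigO_atTop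
    (isBigO_ofReal_add_cpow_atTop a s) (integrableAtFilter_rpow_atTop_iff.mpr hs)

theorem integral_Ioi_ofReal_add_cpow (ha : a ∈ slitPlane) (hs : s.re < -1) :
    ∫ t in Ioi (0 : ℝ), ((t : ℂ) + a) ^ s = -a ^ (s + 1) / (s + 1) := by
  have hs1 : s + 1 ≠ 0 := fun h => by
    linarith [congrArg re h, add_re s 1, one_re, zero_re]
  have hderiv : ∀ t ∈ Ici (0 : ℝ),
      HasDerivAt (fun t : ℝ => ((t : ℂ) + a) ^ (s + 1) / (s + 1)) (((t : ℂ) + a) ^ s) t := by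
    intro t ht
    have := ((((hasDerivAt_id (t : ℂ)).add_const a).cpow_const (c := s + 1)
      (ofReal_add_mem_slitPlane ha ht)).comp_ofReal).div_const (s + 1)
    simpa [hs1] using this
  have hlim : Tendsto (fun t : ℝ => ((t : ℂ) + a) ^ (s + 1) / (s + 1)) atTop (𝓝 0) := by
    have hdecay : Tendsto (fun t : ℝ => t ^ (s + 1).re) atTop (𝓝 0) := by
      simpa using tendsto_rpow_neg_atTop (y := -(s + 1).re) (by linarith [add_re s 1, one_re])
    simpa using ((isBigO_ofReal_add_cpow_atTop a (s + 1)).trans_tendsto hdecay).div_const (s + 1)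
  rw [integral_Ioi_of_hasDerivAt_of_tendsto' hderiv (integrableOn_Ioi_ofReal_add_cpow ha hs) hlim]
  simp [neg_div]

theorem log_I_mul (hw : 0 < w.re) : log (I * w) = π / 2 * I + log w := by
  have harg := abs_lt.mp (abs_arg_lt_pi_div_two_iff.mpr (.inl hw))
  rw [log_mul I_ne_zero (ne_zero_of_re_pos hw) (by rw [arg_I]; constructor <;> linarith), log_I]

theorem log_neg_I_mul (hw : 0 < w.re) : log (-I * w) = -(π / 2) * I + log w := by
  have harg := abs_lt.mp (abs_arg_lt_pi_div_two_iff.mpr (.inl hw))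
  rw [log_mul (neg_ne_zero.mpr I_ne_zero) (ne_zero_of_re_pos hw)
    (by rw [arg_neg_I]; constructor <;> linarith), log_neg_I]

theorem neg_I_mul_cpow_add_I_mul_cpow (hw : 0 < w.re) (u : ℂ) :
    (-I * w) ^ u + (I * w) ^ u = 2 * cos (π * u / 2) * w ^ u := by
  have hw0 := ne_zero_of_re_pos hw
  rw [cpow_def_of_ne_zero (mul_ne_zero (neg_ne_zero.mpr I_ne_zero) hw0),
    cpow_def_of_ne_zero (mul_ne_zero I_ne_zero hw0), cpow_def_of_ne_zero hw0,
    log_neg_I_mul hw, log_I_mul hw, cos, add_mul, add_mul, exp_add, exp_add]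
  ring_nf

end Complex

theorem stmt_2 (w z : ℂ) (hw : 0 < w.re) (hz : 0 < z.re) :
    ∫ t in Set.Ioi (0:ℝ),
        (((t:ℂ) - Complex.I * w) ^ (-(2*z + 1)) + ((t:ℂ) + Complex.I * w) ^ (-(2*z + 1))) =
      Complex.cos (π * z) / (z * w ^ (2*z)) := by
  have hs : (-(2 * z + 1)).re < -1 := by
    linarith [show (-(2 * z + 1)).re = -(2 * z.re + 1) by simp]
  have hneg : -I * w ∈ slitPlane := mem_slitPlane_iff.mpr <| .inr <| by simpa using hw.ne'
  have hpos : I * w ∈ slitPlane := mem_slitPlane_iff.mpr <| .inr <| by simpa using hw.ne'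
  simp_rw [sub_eq_add_neg, ← neg_mul]
  rw [integral_add (integrableOn_Ioi_ofReal_add_cpow hneg hs)
      (integrableOn_Ioi_ofReal_add_cpow hpos hs),
    integral_Ioi_ofReal_add_cpow hneg hs, integral_Ioi_ofReal_add_cpow hpos hs,
    ← add_div, ← neg_add, show -(2 * z + 1) + 1 = -(2 * z) by ring,
    neg_I_mul_cpow_add_I_mul_cpow hw, show (π : ℂ) * -(2 * z) / 2 = -(π * z) by ring,
    Complex.cos_neg, cpow_neg]
  have hz0 : z ≠ 0 := fun h => by simp [h] at hz
  have hw0 : w ^ (2 * z) ≠ 0 := cpow_ne_zero_iff.mpr (.inl (ne_zero_of_re_pos hw))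
  field_simp
end
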